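/- Assume n ≥ 4. Then the following operator identity holds on V: q·G_{1,n}∘G_{2,n−1} + q^{−1}·G_{2,n−1}∘G_{1,n} − G_{1,n−1}∘G_{2,n} − G_{2,n}∘G_{1,n−1} = 0. That is, the image of the highest weight vector s_{ω_2+ω_{n−2}} = q·g_{1,n}⊗g_{2,n−1} + q^{−1}·g_{2,n−1}⊗g_{1,n} − g_{1,n−1}⊗g_{2,n} − g_{2,n}⊗g_{1,n−1} of g_q ⊗ g_q vanishes on V^q_{μω_1}, so this element lies in the quadratic part of the kernel ideal I_q(μ,α) of the braided representation of T(g_q) on V^q_{μω_1} (part of Proposition 6). -/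
import Mathlib


noncomputable section

/-- Index set for the basis `{|m_1, …, m_n⟩ : m_i ∈ ℕ, m_1 + ⋯ + m_n = μ}`. -/
abbrev VIdx (n μ : ℕ) := {m : Fin n → ℕ // ∑ i, m i = μ}

/-- The module `V = V^q_{μω_1}`: the free `K`-module with basis `VIdx n μ`. -/
abbrev VMod (n μ : ℕ) (K : Type*) [Field K] := VIdx n μ →₀ K

/-- The symmetric `q`-number `[a]_q = (q^a − q^{−a})/(q − q^{−1})`, `a ∈ ℤ`. -/
def qint {K : Type*} [Field K] (q : K) (a : ℤ) : K := (q ^ a - q ^ (-a)) / (q - q⁻¹)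

/-- `mval m i` is the coordinate `m_i` (1-based index `1 ≤ i ≤ n`). -/
def mval {n : ℕ} (m : Fin n → ℕ) (i : ℕ) : ℕ :=
  if h : i - 1 < n then m ⟨i - 1, h⟩ else 0

/-- Update the (1-based) `i`-th coordinate of `m` to `v`. -/
def mupd {n : ℕ} (m : Fin n → ℕ) (i v : ℕ) : Fin n → ℕ :=
  if h : i - 1 < n then Function.update m ⟨i - 1, h⟩ v else m

/-- Increase `m_i` by one. -/
def minc {n : ℕ} (m : Fin n → ℕ) (i : ℕ) : Fin n → ℕ := mupd m i (mval m i + 1)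

/-- Decrease `m_i` by one. -/
def mdec {n : ℕ} (m : Fin n → ℕ) (i : ℕ) : Fin n → ℕ := mupd m i (mval m i - 1)

/-- The basis vector `|m_1, …, m_n⟩` of `V` when `Σ m_i = μ`, and `0` otherwise. -/
def sngl (n μ : ℕ) (K : Type*) [Field K] (m : Fin n → ℕ) : VMod n μ K :=
  if h : ∑ i, m i = μ then Finsupp.single ⟨m, h⟩ 1 else 0

/-- The linear operator on `V` extending a map defined on basis vectors. -/
def vlift {n μ : ℕ} {K : Type*} [Field K] (f : VIdx n μ → VMod n μ K) :
    Module.End K (VMod n μ K) :=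
  Finsupp.lift (VMod n μ K) K (VIdx n μ) f

/-- The partial sum `m_a + m_{a+1} + ⋯ + m_b` (1-based indices), as an integer. -/
def psum {n : ℕ} (m : Fin n → ℕ) (a b : ℕ) : ℤ := ∑ k ∈ Finset.Icc a b, (mval m k : ℤ)

/-- The operator `G_{i,j}` on `V = V^q_{μω_1}` (`1 ≤ i ≠ j ≤ n`):
for `i < j`, `G_{i,j}|m⟩ = α q^{j+(m_1+⋯+m_i)−(m_j+⋯+m_n)} [m_j]_q |…, m_i+1, …, m_j−1, …⟩`;
for `i > j`, `G_{i,j}|m⟩ = α q^{j−1+(m_1+⋯+m_{j−1})−(m_{i+1}+⋯+m_n)} [m_j]_q |…, m_j−1, …, m_i+1, …⟩`. -/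
def Gop (n μ : ℕ) (K : Type*) [Field K] (q α : K) (i j : ℕ) : Module.End K (VMod n μ K) :=
  if i < j then
    vlift fun m =>
      (α * q ^ ((j : ℤ) + psum m.1 1 i - psum m.1 j n) * qint q (mval m.1 j : ℤ)) •
        sngl n μ K (minc (mdec m.1 j) i)
  else if j < i then
    vlift fun m =>
      (α * q ^ ((j : ℤ) - 1 + psum m.1 1 (j - 1) - psum m.1 (i + 1) n) *
          qint q (mval m.1 j : ℤ)) •
        sngl n μ K (minc (mdec m.1 j) i)
  else 0

/-- The diagonal operator `T_i` on `V = V^q_{μω_1}` (`1 ≤ i ≤ n−1`):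
`T_i|m⟩ = α q^{i+(m_1+⋯+m_{i−1})−(m_{i+2}+⋯+m_n)}
  ([2]_q q^{m_i−m_{i+1}} − q^{m_i+m_{i+1}+1} − q^{−m_i−m_{i+1}−1})/(q−q^{−1}) |m⟩`. -/
def Tq (n μ : ℕ) (K : Type*) [Field K] (q α : K) (i : ℕ) : Module.End K (VMod n μ K) :=
  vlift fun m =>
    (α * q ^ ((i : ℤ) + psum m.1 1 (i - 1) - psum m.1 (i + 2) n) *
        (((q + q⁻¹) * q ^ ((mval m.1 i : ℤ) - (mval m.1 (i + 1) : ℤ)) -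
            q ^ ((mval m.1 i : ℤ) + (mval m.1 (i + 1) : ℤ) + 1) -
            q ^ (-(mval m.1 i : ℤ) - (mval m.1 (i + 1) : ℤ) - 1)) / (q - q⁻¹))) •
      sngl n μ K m.1

-- helpers
lemma vlift_sngl {n μ : ℕ} {K : Type*} [Field K] (f : VIdx n μ → VMod n μ K) (m : Fin n → ℕ) :
    vlift f (sngl n μ K m) = if h : ∑ i, m i = μ then f ⟨m, h⟩ else 0 := by
  unfold sngl
  split
  · simp [vlift]
  · simp

lemma mval_mupd_self {n : ℕ} (m : Fin n → ℕ) {i : ℕ} (v : ℕ) (hi : i - 1 < n) :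
    mval (mupd m i v) i = v := by
  unfold mval mupd
  rw [dif_pos hi, dif_pos hi, Function.update_self]

lemma mval_mupd_ne {n : ℕ} (m : Fin n → ℕ) {i k : ℕ} (v : ℕ) (hi : i - 1 < n)
    (h : i - 1 ≠ k - 1) : mval (mupd m i v) k = mval m k := by
  unfold mval mupd
  rw [dif_pos hi]
  split
  · rw [Function.update_of_ne (by simp [Fin.ext_iff]; omega)]
  · rfl

lemma sum_mupd {n : ℕ} (m : Fin n → ℕ) {i : ℕ} (v : ℕ) (hi : i - 1 < n) :
    ∑ k, mupd m i v k + mval m i = ∑ k, m k + v := by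
  unfold mupd mval
  rw [dif_pos hi, dif_pos hi]
  rw [Finset.sum_update_of_mem (Finset.mem_univ _),
    ← Finset.add_sum_erase _ m (Finset.mem_univ ⟨i - 1, hi⟩), Finset.erase_eq]
  omega

lemma psum_one {n : ℕ} (m : Fin n → ℕ) (a : ℕ) : psum m a a = (mval m a : ℤ) := by
  simp [psum]

lemma psum_pair {n : ℕ} (m : Fin n → ℕ) {a b : ℕ} (h : b = a + 1) :
    psum m a b = (mval m a : ℤ) + mval m b := by
  subst h
  unfold psum
  rw [show Finset.Icc a (a+1) = {a, a+1} by ext k; simp [Finset.mem_Icc]; omega]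
  rw [Finset.sum_insert (by simp)]
  simp

lemma mupd_eval {n : ℕ} (m : Fin n → ℕ) (i v : ℕ) (k : Fin n) :
    mupd m i v k = if i - 1 = k.1 then v else m k := by
  unfold mupd
  split
  next h =>
    rcases eq_or_ne (i - 1) k.1 with h' | h'
    · rw [if_pos h', show (⟨i-1,h⟩ : Fin n) = k from Fin.ext h', Function.update_self]
    · rw [if_neg h', Function.update_of_ne (by simp [Fin.ext_iff]; omega)]
  next h =>
    rw [if_neg (by omega)]

lemma qint_zero {K : Type*} [Field K] (q : K) : qint q 0 = 0 := by simp [qint]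

lemma Gop_sngl {n μ : ℕ} {K : Type*} [Field K] (q α : K) {i j : ℕ} (hij : i < j)
    (hjn : j - 1 < n) (m : Fin n → ℕ) :
    Gop n μ K q α i j (sngl n μ K m) =
      (α * q ^ ((j : ℤ) + psum m 1 i - psum m j n) * qint q (mval m j : ℤ)) •
        sngl n μ K (minc (mdec m j) i) := by
  rw [Gop, if_pos hij, vlift_sngl]
  split
  · rfl
  · rcases Nat.eq_zero_or_pos (mval m j) with hj | hj
    · rw [hj]
      simp [qint_zero]
    · rw [sngl, dif_neg, smul_zero]
      have S1 : ∑ k, mdec m j k + mval m j = ∑ k, m k + (mval m j - 1) :=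
        sum_mupd m _ hjn
      have S2 : ∑ k, minc (mdec m j) i k + mval (mdec m j) i =
          ∑ k, mdec m j k + (mval (mdec m j) i + 1) :=
        sum_mupd _ _ (by omega)
      omega

lemma sum_final {n : ℕ} (hn : 4 ≤ n) (m : Fin n → ℕ) :
    ∑ k, mupd (mupd (mupd (mupd m (n-1) (mval m (n-1) - 1)) 2 (mval m 2 + 1)) n
        (mval m n - 1)) 1 (mval m 1 + 1) k + mval m (n-1) + mval m n
      = ∑ k, m k + (mval m (n-1) - 1) + (mval m n - 1) + 2 := by
  have E : ∀ (i k : ℕ), 1 ≤ i → i ≤ n → i - 1 ≠ k - 1 →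
      ∀ (X : Fin n → ℕ) (v : ℕ), mval (mupd X i v) k = mval X k :=
    fun i k h1 h2 h3 X v => mval_mupd_ne X v (by omega) h3
  have S1 := sum_mupd m (i := n-1) (mval m (n-1) - 1) (by omega)
  have S2 := sum_mupd (mupd m (n-1) (mval m (n-1) - 1)) (i := 2) (mval m 2 + 1) (by omega)
  have S3 := sum_mupd (mupd (mupd m (n-1) (mval m (n-1) - 1)) 2 (mval m 2 + 1)) (i := n)
    (mval m n - 1) (by omega)
  have S4 := sum_mupd (mupd (mupd (mupd m (n-1) (mval m (n-1) - 1)) 2 (mval m 2 + 1)) n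
    (mval m n - 1)) (i := 1) (mval m 1 + 1) (by omega)
  simp only [E (n-1) 2 (by omega) (by omega) (by omega),
    E (n-1) n (by omega) (by omega) (by omega),
    E 2 n (by omega) (by omega) (by omega),
    E (n-1) 1 (by omega) (by omega) (by omega),
    E 2 1 (by omega) (by omega) (by omega),
    E n 1 (by omega) (by omega) (by omega)] at S2 S3 S4
  omega

/-- The image of the highest weight vector
`s_{ω_2+ω_{n−2}} = q g_{1,n} ⊗ g_{2,n−1} + q^{−1} g_{2,n−1} ⊗ g_{1,n}
 − g_{1,n−1} ⊗ g_{2,n} − g_{2,n} ⊗ g_{1,n−1}` of `g_q ⊗ g_q` vanishes on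
`V^q_{μω_1}`: it lies in the quadratic part of the kernel ideal `I_q(μ, α)` of
the braided representation of `T(g_q)` on `V^q_{μω_1}`. -/
theorem stmt_18 (n : ℕ) (hn : 4 ≤ n) (K : Type*) [Field K] (q : K) (hq0 : q ≠ 0)
    (hq1 : q ^ 2 ≠ 1) (μ : ℕ) (α : K) :
    q • (Gop n μ K q α 1 n * Gop n μ K q α 2 (n - 1)) +
        q⁻¹ • (Gop n μ K q α 2 (n - 1) * Gop n μ K q α 1 n) -
        Gop n μ K q α 1 (n - 1) * Gop n μ K q α 2 n -
        Gop n μ K q α 2 n * Gop n μ K q α 1 (n - 1) = 0 := by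
  refine Finsupp.lhom_ext fun x b => ?_
  rw [show (Finsupp.single x b : VMod n μ K) = b • Finsupp.single x 1 by
    rw [Finsupp.smul_single, smul_eq_mul, mul_one], map_smul, map_smul]
  refine congrArg (b • ·) ?_
  obtain ⟨m, hm⟩ := x
  have hsngl : (Finsupp.single (⟨m, hm⟩ : VIdx n μ) 1 : VMod n μ K) = sngl n μ K m := by
    rw [sngl, dif_pos hm]
  simp only [LinearMap.add_apply, LinearMap.sub_apply, LinearMap.smul_apply,
    Module.End.mul_apply, LinearMap.zero_apply, hsngl]
  rw [Gop_sngl q α (show (2:ℕ) < n-1 by omega) (by omega) m,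
      Gop_sngl q α (show (1:ℕ) < n by omega) (by omega) m,
      Gop_sngl q α (show (2:ℕ) < n by omega) (by omega) m,
      Gop_sngl q α (show (1:ℕ) < n-1 by omega) (by omega) m,
      map_smul, map_smul, map_smul, map_smul,
      Gop_sngl q α (show (1:ℕ) < n by omega) (by omega) _,
      Gop_sngl q α (show (2:ℕ) < n-1 by omega) (by omega) _,
      Gop_sngl q α (show (1:ℕ) < n-1 by omega) (by omega) _,
      Gop_sngl q α (show (2:ℕ) < n by omega) (by omega) _]
  have E : ∀ (i k : ℕ), 1 ≤ i → i ≤ n → i - 1 ≠ k - 1 →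
      ∀ (X : Fin n → ℕ) (v : ℕ), mval (mupd X i v) k = mval X k :=
    fun i k h1 h2 h3 X v => mval_mupd_ne X v (by omega) h3
  have ES : ∀ (i : ℕ), 1 ≤ i → i ≤ n → ∀ (X : Fin n → ℕ) (v : ℕ),
      mval (mupd X i v) i = v :=
    fun i h1 h2 X v => mval_mupd_self X v (by omega)
  have P2 : ∀ X : Fin n → ℕ, psum X 1 2 = (mval X 1 : ℤ) + mval X 2 :=
    fun X => psum_pair X rfl
  have Pn : ∀ X : Fin n → ℕ, psum X (n-1) n = (mval X (n-1) : ℤ) + mval X n :=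
    fun X => psum_pair X (by omega)
  simp only [minc, mdec, psum_one, P2, Pn,
    E (n-1) 1 (by omega) (by omega) (by omega), E (n-1) 2 (by omega) (by omega) (by omega),
    E (n-1) n (by omega) (by omega) (by omega),
    E n 1 (by omega) (by omega) (by omega), E n 2 (by omega) (by omega) (by omega),
    E n (n-1) (by omega) (by omega) (by omega),
    E 1 2 (by omega) (by omega) (by omega), E 1 (n-1) (by omega) (by omega) (by omega),
    E 1 n (by omega) (by omega) (by omega),
    E 2 1 (by omega) (by omega) (by omega), E 2 (n-1) (by omega) (by omega) (by omega),
    E 2 n (by omega) (by omega) (by omega),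
    ES 1 (by omega) (by omega), ES 2 (by omega) (by omega),
    ES (n-1) (by omega) (by omega), ES n (by omega) (by omega)]
  have hV2 : mupd (mupd (mupd (mupd m n (mval m n - 1)) 1 (mval m 1 + 1)) (n - 1)
        (mval m (n - 1) - 1)) 2 (mval m 2 + 1)
      = mupd (mupd (mupd (mupd m (n - 1) (mval m (n - 1) - 1)) 2 (mval m 2 + 1)) n
        (mval m n - 1)) 1 (mval m 1 + 1) := by
    funext k
    simp only [mupd_eval]
    split_ifs <;> first | rfl | omega
  have hV3 : mupd (mupd (mupd (mupd m n (mval m n - 1)) 2 (mval m 2 + 1)) (n - 1)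
        (mval m (n - 1) - 1)) 1 (mval m 1 + 1)
      = mupd (mupd (mupd (mupd m (n - 1) (mval m (n - 1) - 1)) 2 (mval m 2 + 1)) n
        (mval m n - 1)) 1 (mval m 1 + 1) := by
    funext k
    simp only [mupd_eval]
    split_ifs <;> first | rfl | omega
  have hV4 : mupd (mupd (mupd (mupd m (n - 1) (mval m (n - 1) - 1)) 1 (mval m 1 + 1)) n
        (mval m n - 1)) 2 (mval m 2 + 1)
      = mupd (mupd (mupd (mupd m (n - 1) (mval m (n - 1) - 1)) 2 (mval m 2 + 1)) n
        (mval m n - 1)) 1 (mval m 1 + 1) := by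
    funext k
    simp only [mupd_eval]
    split_ifs <;> first | rfl | omega
  rw [hV2, hV3, hV4]
  simp only [smul_smul]
  rw [← add_smul, ← sub_smul, ← sub_smul]
  by_cases hcd : 1 ≤ mval m (n-1) ∧ 1 ≤ mval m n
  · obtain ⟨hc, hd⟩ := hcd
    have hmain : ∀ (x1 x2 y1 y2 z1 z2 w1 w2 : ℤ) (C D : K),
        x1 + x2 + 1 = z1 + z2 → y1 + y2 - 1 = z1 + z2 → w1 + w2 = z1 + z2 →
        q * (α * q ^ x1 * C * (α * q ^ x2 * D)) +
          q⁻¹ * (α * q ^ y1 * D * (α * q ^ y2 * C)) -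
          α * q ^ z1 * D * (α * q ^ z2 * C) -
          α * q ^ w1 * C * (α * q ^ w2 * D) = 0 := by
      intro x1 x2 y1 y2 z1 z2 w1 w2 C D h1 h2 h3
      have e1 : q * (q ^ x1 * q ^ x2) = q ^ (z1 + z2) := by
        rw [← zpow_add₀ hq0, ← zpow_one_add₀ hq0]
        congr 1 <;> omega
      have e2 : q⁻¹ * (q ^ y1 * q ^ y2) = q ^ (z1 + z2) := by
        rw [← zpow_add₀ hq0, ← zpow_neg_one, ← zpow_add₀ hq0]
        congr 1 <;> omega
      have e3 : q ^ w1 * q ^ w2 = q ^ (z1 + z2) := by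
        rw [← zpow_add₀ hq0]
        congr 1 <;> omega
      have e4 : q ^ z1 * q ^ z2 = q ^ (z1 + z2) := by
        rw [← zpow_add₀ hq0]
      linear_combination (α * α * C * D) * (e1 + e2 - e3 - e4)
    refine smul_eq_zero_of_left ?_ _
    apply hmain
    · omega
    · omega
    · omega
  · have hsum := sum_final hn m
    rw [sngl, dif_neg (by omega), smul_zero]
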